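/- arXiv:1810.00984 — 4 statements merged into one kernel-verified Lean document; each statement's English description precedes it below -/
import Mathlib

section
/- Let F ⊆ [0,1] be a set and δ ∈ (0,1). Suppose F requires N δ-boxes to be covered (N = N_δ(F) is the minimal covering number by intervals of length δ). Then there exists x ∈ [0,1] such that N_δ(F ∩ [0,x]) ≥ ⌊N/2⌋ and N_δ(F ∩ [x,1]) ≥ ⌊N/2⌋. -/
/-!
Write `N`, `f x` and `g x` for the covering numbers of `F ∩ [a, b]`, `F ∩ [a, x]` and
`F ∩ [x, b]`. Covering numbers are subadditive, so `f x + g x ≥ N` for every `x`, and moving `x`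
to the right by at most `δ` lowers `g` by at most one, since the removed piece fits in one
interval. Let `c` be the infimum of the points where `f` reaches `⌊N/2⌋`. If `f c ≥ ⌊N/2⌋`, then
just to the left of `c` we have `g ≥ N - f > ⌊N/2⌋`, so `g c ≥ ⌊N/2⌋`; otherwise `g c > ⌊N/2⌋`
and some `x ∈ [c, c + δ)` with `f x ≥ ⌊N/2⌋` works.
-/

open Set

/-- The minimal number of closed intervals of length `δ` needed to cover `A ⊆ ℝ`. -/
noncomputable def covByIntervals (A : Set ℝ) (δ : ℝ) : ℕ :=
  sInf {k : ℕ | ∃ t : Finset ℝ, t.card = k ∧ A ⊆ ⋃ a ∈ t, Set.Icc a (a + δ)}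

open Bornology

namespace covByIntervals

variable {A B C : Set ℝ} {δ : ℝ}

lemma le_card (t : Finset ℝ) (h : A ⊆ ⋃ a ∈ t, Icc a (a + δ)) : covByIntervals A δ ≤ t.card :=
  Nat.sInf_le ⟨t, rfl, h⟩

lemma exists_finset_covering (hA : IsBounded A) (hδ : 0 < δ) :
    ∃ t : Finset ℝ, A ⊆ ⋃ a ∈ t, Icc a (a + δ) := by
  obtain ⟨s, hs, hcov⟩ := Metric.totallyBounded_iff.mp
    (hA.isCompact_closure.totallyBounded.subset subset_closure) (δ / 2) (half_pos hδ)
  refine ⟨hs.toFinset.image (· - δ / 2), fun y hy => ?_⟩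
  obtain ⟨x, hx, hyx⟩ := mem_iUnion₂.mp (hcov hy)
  rw [Real.ball_eq_Ioo] at hyx
  exact mem_iUnion₂.mpr ⟨x - δ / 2, Finset.mem_image_of_mem _ (hs.mem_toFinset.mpr hx),
    by constructor <;> linarith [hyx.1, hyx.2]⟩

lemma exists_card_eq (hA : IsBounded A) (hδ : 0 < δ) :
    ∃ t : Finset ℝ, t.card = covByIntervals A δ ∧ A ⊆ ⋃ a ∈ t, Icc a (a + δ) :=
  let ⟨t, ht⟩ := exists_finset_covering hA hδ
  Nat.sInf_mem (s := {k | ∃ t : Finset ℝ, t.card = k ∧ A ⊆ ⋃ a ∈ t, Icc a (a + δ)}) ⟨_, t, rfl, ht⟩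

lemma le_add_of_subset_union (hC : C ⊆ A ∪ B) (hA : IsBounded A) (hB : IsBounded B)
    (hδ : 0 < δ) : covByIntervals C δ ≤ covByIntervals A δ + covByIntervals B δ := by
  obtain ⟨t, htA, ht⟩ := exists_card_eq hA hδ
  obtain ⟨s, hsB, hs⟩ := exists_card_eq hB hδ
  rw [← htA, ← hsB]
  refine (le_card (t ∪ s) ?_).trans (Finset.card_union_le t s)
  rw [Finset.set_biUnion_union]
  exact hC.trans (union_subset_union ht hs)

lemma le_one_of_subset_Icc {y : ℝ} (h : A ⊆ Icc y (y + δ)) : covByIntervals A δ ≤ 1 :=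
  le_card {y} (by simpa using h)

end covByIntervals

section Splitting

open covByIntervals

variable {F : Set ℝ} {δ a b : ℝ}

lemma covByIntervals_inter_Icc_le_add (hδ : 0 < δ) (x : ℝ) :
    covByIntervals (F ∩ Icc a b) δ ≤
      covByIntervals (F ∩ Icc a x) δ + covByIntervals (F ∩ Icc x b) δ := by
  refine le_add_of_subset_union ?_ (Metric.isBounded_Icc a x |>.subset inter_subset_right)
    (Metric.isBounded_Icc x b |>.subset inter_subset_right) hδ
  rintro w ⟨hw, hwa, hwb⟩
  rcases le_total w x with hwx | hxw
  · exact Or.inl ⟨hw, hwa, hwx⟩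
  · exact Or.inr ⟨hw, hxw, hwb⟩

lemma covByIntervals_inter_Icc_le_add_one {y z : ℝ} (hδ : 0 < δ) (hzy : z ≤ y + δ) :
    covByIntervals (F ∩ Icc y b) δ ≤ covByIntervals (F ∩ Icc z b) δ + 1 := by
  have hpiece : covByIntervals (F ∩ Icc y z) δ ≤ 1 :=
    le_one_of_subset_Icc fun w hw => ⟨hw.2.1, hw.2.2.trans hzy⟩
  have := covByIntervals_inter_Icc_le_add (F := F) (a := y) (b := b) hδ z
  omega

lemma exists_mem_Icc_half_le_covByIntervals (hδ : 0 < δ) (hab : a ≤ b) :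
    ∃ x ∈ Icc a b,
      covByIntervals (F ∩ Icc a b) δ / 2 ≤ covByIntervals (F ∩ Icc a x) δ ∧
      covByIntervals (F ∩ Icc a b) δ / 2 ≤ covByIntervals (F ∩ Icc x b) δ := by
  set N := covByIntervals (F ∩ Icc a b) δ
  set S := {x ∈ Icc a b | N / 2 ≤ covByIntervals (F ∩ Icc a x) δ}
  have hbS : b ∈ S := ⟨right_mem_Icc.2 hab, Nat.div_le_self N 2⟩
  have hSbdd : BddBelow S := ⟨a, fun x hx => hx.1.1⟩
  set c := sInf S
  have hc : c ∈ Icc a b := ⟨le_csInf ⟨b, hbS⟩ fun x hx => hx.1.1, csInf_le hSbdd hbS⟩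
  have hsplit (x : ℝ) := covByIntervals_inter_Icc_le_add (F := F) (a := a) (b := b) hδ x
  by_cases hcS : N / 2 ≤ covByIntervals (F ∩ Icc a c) δ
  · refine ⟨c, hc, hcS, ?_⟩
    rcases hc.1.eq_or_lt with hac | hac
    · rw [← hac]
      exact Nat.div_le_self N 2
    · set y := max a (c - δ)
      have hyS : y ∉ S := fun hy => (csInf_le hSbdd hy).not_gt (max_lt hac (by linarith))
      have hy : ¬ N / 2 ≤ covByIntervals (F ∩ Icc a y) δ := fun h =>
        hyS ⟨⟨le_max_left _ _, max_le hab (by linarith [hc.2])⟩, h⟩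
      have := hsplit y
      have := covByIntervals_inter_Icc_le_add_one (F := F) (b := b) hδ
        (show c ≤ y + δ by linarith [le_max_right a (c - δ)])
      omega
  · obtain ⟨x, hxS, hxc⟩ := exists_lt_of_csInf_lt ⟨b, hbS⟩ (lt_add_of_pos_right c hδ)
    refine ⟨x, hxS.1, hxS.2, ?_⟩
    have := hsplit c
    have := covByIntervals_inter_Icc_le_add_one (F := F) (b := b) hδ hxc.le
    omega

end Splitting

/-- If `F ⊆ [0,1]` needs `N` intervals of length `δ` to be covered, then there is a point
`x ∈ [0,1]` splitting `F` into two parts each needing at least `⌊N/2⌋` intervals. -/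
theorem exists_split_covering (F : Set ℝ) (hF : F ⊆ Set.Icc (0:ℝ) 1)
    (δ : ℝ) (hδ : δ ∈ Set.Ioo (0:ℝ) 1) :
    ∃ x ∈ Set.Icc (0:ℝ) 1,
      covByIntervals F δ / 2 ≤ covByIntervals (F ∩ Set.Icc 0 x) δ ∧
      covByIntervals F δ / 2 ≤ covByIntervals (F ∩ Set.Icc x 1) δ := by
  have hsplit := exists_mem_Icc_half_le_covByIntervals (F := F) hδ.1 zero_le_one
  rwa [inter_eq_self_of_subset_left hF] at hsplit
end

section
/- Let F ⊆ ℝ be a compact set, regarded as a subset of a line in ℝ². Then the lower box dimension of the triangle set satisfies lower-dim_B Δ(F) ≥ 2 · lower-dim_B F. -/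
open Metric Set Filter

/-- The triangle set of `F ⊆ ℝ²`:
`Δ(F) = {(|x−y|, |z−y|, |x−z|) : x, y, z ∈ F} ⊆ ℝ³`. -/
def triangleSet (F : Set (EuclideanSpace ℝ (Fin 2))) : Set (ℝ × ℝ × ℝ) :=
  {p | ∃ x ∈ F, ∃ y ∈ F, ∃ z ∈ F, p = (dist x y, dist z y, dist x z)}

/-- Minimal number of closed balls of radius `δ` needed to cover `A`. -/
noncomputable def covN {E : Type*} [PseudoMetricSpace E] (A : Set E) (δ : ℝ) : ℕ :=
  sInf {k : ℕ | ∃ t : Finset E, t.card = k ∧ A ⊆ ⋃ x ∈ t, Metric.closedBall x δ}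

/-- The lower box dimension of a set. -/
noncomputable def lowerBoxDim {E : Type*} [PseudoMetricSpace E] (A : Set E) : ℝ :=
  Filter.liminf (fun δ : ℝ => Real.log (covN A δ) / -Real.log δ) (nhdsWithin 0 (Set.Ioi 0))

/-- The embedding of `ℝ` into `ℝ²` as the horizontal axis, `t ↦ (t, 0)`. -/
noncomputable def lineEmb (t : ℝ) : EuclideanSpace ℝ (Fin 2) :=
  (WithLp.equiv 2 (Fin 2 → ℝ)).symm ![t, 0]

/-!
Let `x₀ = min F`. For `y, z ∈ F` the triangle `(x₀, y, z)` has sides `y - x₀` and `z - x₀`, so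
`F × F` is a translate of a coordinate projection of `Δ(F)`, and projections are 1-Lipschitz.
Hence `N_δ(Δ(F)) ≥ N_δ(F × F) ≥ N_{2δ}(F)²`, the last step by comparing covers with maximal
`2δ`-separated sets. Taking logarithms gives the factor `2`; the change of scale `δ ↦ 2δ` does
not affect the liminf. Since `Δ(F)` lies in the cube `[0, diam F]³`, its covering numbers grow
only polynomially in `1/δ`, so its log-ratio is bounded and the liminf in `ℝ` is not the junk
value of an unbounded function.
-/

open scoped NNReal ENNReal Topology

namespace Metric

variable {X Y : Type*} [PseudoEMetricSpace X] [PseudoEMetricSpace Y] {ε : ℝ≥0}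

lemma IsSeparated.prod {ε : ℝ≥0∞} {C : Set X} {D : Set Y} (hC : IsSeparated ε C)
    (hD : IsSeparated ε D) : IsSeparated ε (C ×ˢ D) := by
  rintro ⟨c, d⟩ ⟨hc, hd⟩ ⟨c', d'⟩ ⟨hc', hd'⟩ hne
  rw [Prod.edist_eq]
  by_cases hcc : c = c'
  · exact lt_max_of_lt_right (hD hd hd' fun hdd => hne (Prod.ext hcc hdd))
  · exact lt_max_of_lt_left (hC hc hc' hcc)

lemma IsCover.prod {A : Set X} {B : Set Y} {C : Set X} {D : Set Y} (hC : IsCover ε A C)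
    (hD : IsCover ε B D) : IsCover ε (A ×ˢ B) (C ×ˢ D) := by
  rintro ⟨a, b⟩ ⟨ha, hb⟩
  obtain ⟨c, hc, hac⟩ := hC ha
  obtain ⟨d, hd, hbd⟩ := hD hb
  exact ⟨(c, d), ⟨hc, hd⟩, by simpa [Prod.edist_eq] using And.intro hac hbd⟩

lemma packingNumber_mul_le_prod (A : Set X) (B : Set Y) :
    packingNumber ε A * packingNumber ε B ≤ packingNumber ε (A ×ˢ B) := by
  simp only [packingNumber, ENat.iSup_mul, ENat.mul_iSup, iSup_le_iff]
  intro D hDB hD C hCA hC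
  rw [← Set.encard_prod]
  exact le_iSup₂_of_le (C ×ˢ D) (prod_mono hCA hDB) (le_iSup_of_le (hC.prod hD) le_rfl)

lemma externalCoveringNumber_two_mul_mul_le_prod (A : Set X) (B : Set Y) :
    externalCoveringNumber (2 * ε) A * externalCoveringNumber (2 * ε) B ≤
      externalCoveringNumber ε (A ×ˢ B) :=
  calc externalCoveringNumber (2 * ε) A * externalCoveringNumber (2 * ε) B
      ≤ packingNumber (2 * ε) A * packingNumber (2 * ε) B := by
        gcongr <;> exact (externalCoveringNumber_le_coveringNumber _ _).trans
          (coveringNumber_le_packingNumber _ _)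
    _ ≤ packingNumber (2 * ε) (A ×ˢ B) := packingNumber_mul_le_prod A B
    _ ≤ externalCoveringNumber ε (A ×ˢ B) := packingNumber_two_mul_le_externalCoveringNumber _ _

lemma _root_.LipschitzWith.externalCoveringNumber_image_le {K : ℝ≥0} {f : X → Y}
    (hf : LipschitzWith K f) (A : Set X) :
    externalCoveringNumber (K * ε) (f '' A) ≤ externalCoveringNumber ε A := by
  simp only [externalCoveringNumber, le_iInf_iff]
  intro C hC
  exact (iInf₂_le _ (hC.image_lipschitz hf)).trans (encard_image_le f C)

end Metric

open Metric

section CoveringNumber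

variable {E : Type*} [PseudoMetricSpace E]

lemma covN_eq_externalCoveringNumber {A : Set E} {ε : ℝ≥0} (hA : TotallyBounded A)
    (hε : ε ≠ 0) : (covN A ε : ℕ∞) = externalCoveringNumber ε A := by
  have hcover (t : Finset E) :
      A ⊆ ⋃ x ∈ t, closedBall x ε ↔ IsCover ε A (t : Set E) := by
    simp [isCover_iff_subset_iUnion_closedBall]
  apply le_antisymm
  · refine le_iInf₂ fun C hC => ?_
    rcases C.finite_or_infinite with hfin | hinf
    · rw [← hfin.coe_toFinset, Set.encard_coe_eq_coe_finsetCard, Nat.cast_le]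
      exact Nat.sInf_le ⟨_, rfl, (hcover _).2 (by simpa)⟩
    · simp [hinf.encard_eq]
  · obtain ⟨C, -, hCfin, hC⟩ := exists_finite_isCover_of_totallyBounded hε hA
    obtain ⟨t, ht, hAt⟩ := Nat.sInf_mem
      (s := {k | ∃ t : Finset E, t.card = k ∧ A ⊆ ⋃ x ∈ t, closedBall x ε})
      ⟨_, hCfin.toFinset, rfl, (hcover _).2 (by simpa)⟩
    rw [covN, ← ht, ← Set.encard_coe_eq_coe_finsetCard]
    exact iInf₂_le _ ((hcover t).1 hAt)

end CoveringNumber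

lemma exists_isCover_Icc (a b : ℝ) {ε : ℝ≥0} (hε : ε ≠ 0) :
    ∃ G : Finset ℝ, G.card ≤ ⌊(b - a) / ε⌋₊ + 1 ∧ IsCover ε (Icc a b) G := by
  have hε' : (0 : ℝ) < ε := by positivity
  refine ⟨(Finset.range (⌊(b - a) / ε⌋₊ + 1)).image fun k : ℕ => a + ε * k,
    Finset.card_image_le.trans (Finset.card_range _).le, ?_⟩
  rw [isCover_iff_subset_iUnion_closedBall]
  intro x ⟨hax, hxb⟩
  set k := ⌊(x - a) / ε⌋₊
  have hk : k ≤ ⌊(b - a) / ε⌋₊ := Nat.floor_le_floor (by gcongr)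
  have hk₁ : (k : ℝ) ≤ (x - a) / ε := Nat.floor_le (by positivity)
  have hk₂ : (x - a) / ε < k + 1 := Nat.lt_floor_add_one _
  rw [le_div_iff₀ hε'] at hk₁
  rw [div_lt_iff₀ hε'] at hk₂
  refine mem_iUnion₂.2 ⟨a + ε * k, Finset.mem_coe.2 <|
    Finset.mem_image_of_mem _ (Finset.mem_range.2 (Nat.lt_succ_of_le hk)), ?_⟩
  rw [mem_closedBall, Real.dist_eq, abs_le]
  constructor <;> nlinarith

lemma log_natCast_le_log_natCast {m n : ℕ} (h : m ≤ n) : Real.log m ≤ Real.log n := by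
  rcases m.eq_zero_or_pos with rfl | hm
  · simpa using Real.log_natCast_nonneg n
  · exact Real.log_le_log (by positivity) (by exact_mod_cast h)

lemma tendsto_log_const_mul_div_log {c : ℝ} (hc : 0 < c) :
    Tendsto (fun δ => Real.log (c * δ) / Real.log δ) (𝓝[>] 0) (𝓝 1) := by
  have h := ((tendsto_inv_atBot_zero.comp Real.tendsto_log_nhdsGT_zero).const_mul
    (Real.log c)).add_const 1
  rw [mul_zero, zero_add] at h
  refine h.congr' ?_
  filter_upwards [Ioo_mem_nhdsGT one_pos] with δ ⟨hδ₀, hδ₁⟩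
  rw [Real.log_mul hc.ne' hδ₀.ne', add_div, div_self (Real.log_neg hδ₀ hδ₁).ne]
  rfl

section BoxDimension

variable {E E' : Type*} [PseudoMetricSpace E] [PseudoMetricSpace E']

noncomputable def covRatio (A : Set E) (δ : ℝ) : ℝ :=
  Real.log (covN A δ) / -Real.log δ

lemma lowerBoxDim_eq_liminf_covRatio (A : Set E) :
    lowerBoxDim A = liminf (covRatio A) (𝓝[>] 0) :=
  rfl

lemma isBoundedUnder_ge_covRatio (A : Set E) :
    IsBoundedUnder (· ≥ ·) (𝓝[>] 0) (covRatio A) := by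
  refine isBoundedUnder_of_eventually_ge (a := 0) ?_
  filter_upwards [Ioo_mem_nhdsGT one_pos] with δ ⟨hδ₀, hδ₁⟩
  exact div_nonneg (Real.log_natCast_nonneg _) (neg_nonneg.2 (Real.log_nonpos hδ₀.le hδ₁.le))

lemma covRatio_le_of_covN_le {A : Set E} {δ : ℝ} {k : ℕ} (hδ₀ : 0 < δ) (hδ₁ : δ < 1)
    (h : (covN A δ : ℝ) ≤ δ⁻¹ ^ k) : covRatio A δ ≤ k := by
  have hlog : 0 < -Real.log δ := neg_pos.2 (Real.log_neg hδ₀ hδ₁)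
  rw [covRatio, div_le_iff₀ hlog]
  rcases (covN A δ).eq_zero_or_pos with h₀ | h₀
  · simp only [h₀, CharP.cast_eq_zero, Real.log_zero]
    positivity
  · calc Real.log (covN A δ) ≤ Real.log (δ⁻¹ ^ k) := Real.log_le_log (by exact_mod_cast h₀) h
      _ = k * -Real.log δ := by rw [Real.log_pow, Real.log_inv]

lemma isCoboundedUnder_ge_covRatio {A : Set E} {k : ℕ}
    (h : ∀ᶠ δ in 𝓝[>] 0, (covN A δ : ℝ) ≤ δ⁻¹ ^ k) :
    IsCoboundedUnder (· ≥ ·) (𝓝[>] 0) (covRatio A) := by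
  refine (isBoundedUnder_of_eventually_le (a := (k : ℝ)) ?_).isCoboundedUnder_ge
  filter_upwards [h, Ioo_mem_nhdsGT one_pos] with δ h ⟨hδ₀, hδ₁⟩
  exact covRatio_le_of_covN_le hδ₀ hδ₁ h

lemma mul_covRatio_mul_le {A : Set E} {B : Set E'} {n : ℕ} {c δ : ℝ} (hδ₀ : 0 < δ)
    (hδ₁ : δ < 1) (hcδ₀ : 0 < c * δ) (hcδ₁ : c * δ < 1) (h : covN A (c * δ) ^ n ≤ covN B δ) :
    n * covRatio A (c * δ) * (Real.log (c * δ) / Real.log δ) ≤ covRatio B δ := by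
  have hlog : Real.log δ < 0 := Real.log_neg hδ₀ hδ₁
  have hclog : Real.log (c * δ) ≠ 0 := (Real.log_neg hcδ₀ hcδ₁).ne
  calc n * covRatio A (c * δ) * (Real.log (c * δ) / Real.log δ)
      = Real.log (covN A (c * δ) ^ n : ℕ) / -Real.log δ := by
        rw [covRatio, Nat.cast_pow, Real.log_pow]
        field_simp
    _ ≤ covRatio B δ :=
        div_le_div_of_nonneg_right (log_natCast_le_log_natCast h) (neg_nonneg.2 hlog.le)

theorem mul_lowerBoxDim_le {A : Set E} {B : Set E'} {n k : ℕ} {c : ℝ} (hc : 0 < c)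
    (hAB : ∀ᶠ δ in 𝓝[>] 0, covN A (c * δ) ^ n ≤ covN B δ)
    (hB : ∀ᶠ δ in 𝓝[>] 0, (covN B δ : ℝ) ≤ δ⁻¹ ^ k) :
    n * lowerBoxDim A ≤ lowerBoxDim B := by
  rw [lowerBoxDim_eq_liminf_covRatio, lowerBoxDim_eq_liminf_covRatio]
  have hc_tendsto : Tendsto (c * ·) (𝓝[>] (0 : ℝ)) (𝓝[>] 0) :=
    tendsto_nhdsWithin_of_tendsto_nhds_of_eventually_within _
      (((continuous_const_mul c).tendsto' 0 0 (mul_zero c)).mono_left nhdsWithin_le_nhds)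
      (eventually_nhdsWithin_of_forall fun δ hδ => mul_pos hc hδ)
  refine le_of_tendsto (((continuous_const_mul (n : ℝ)).tendsto _).mono_left
    (nhdsWithin_le_nhds (s := Iio (liminf (covRatio A) (𝓝[>] 0))))) ?_
  filter_upwards [self_mem_nhdsWithin] with d (hd : d < liminf (covRatio A) (𝓝[>] 0))
  have hd_eventually : ∀ᶠ δ in 𝓝[>] 0, d < covRatio A (c * δ) :=
    hc_tendsto.eventually (eventually_lt_of_lt_liminf hd (isBoundedUnder_ge_covRatio A))
  have hratio := tendsto_log_const_mul_div_log hc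
  calc n * d = liminf (fun δ => n * d * (Real.log (c * δ) / Real.log δ)) (𝓝[>] 0) := by
        simpa using ((hratio.const_mul (n * d)).liminf_eq).symm
    _ ≤ liminf (covRatio B) (𝓝[>] 0) := by
      refine liminf_le_liminf ?_ (hratio.const_mul _).isBoundedUnder_ge
        (isCoboundedUnder_ge_covRatio hB)
      filter_upwards [hd_eventually, hAB, Ioo_mem_nhdsGT one_pos,
        hc_tendsto (Ioo_mem_nhdsGT one_pos)] with δ hd hAB ⟨hδ₀, hδ₁⟩ ⟨hcδ₀, hcδ₁⟩
      refine le_trans ?_ (mul_covRatio_mul_le hδ₀ hδ₁ hcδ₀ hcδ₁ hAB)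
      gcongr
      exact div_nonneg_of_nonpos (Real.log_neg hcδ₀ hcδ₁).le (Real.log_neg hδ₀ hδ₁).le

end BoxDimension

lemma isometry_lineEmb : Isometry lineEmb :=
  Isometry.of_dist_eq fun a b => by
    simp [lineEmb, EuclideanSpace.dist_eq, Real.dist_eq, Real.sqrt_sq_eq_abs]

lemma triangleSet_lineEmb_image (F : Set ℝ) :
    triangleSet (lineEmb '' F) =
      (fun p : ℝ × ℝ × ℝ => (dist p.1 p.2.1, dist p.2.2 p.2.1, dist p.1 p.2.2)) '' (F ×ˢ F ×ˢ F) := by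
  ext p
  constructor
  · rintro ⟨_, ⟨x, hx, rfl⟩, _, ⟨y, hy, rfl⟩, _, ⟨z, hz, rfl⟩, rfl⟩
    exact ⟨(x, y, z), ⟨hx, hy, hz⟩, by simp [isometry_lineEmb.dist_eq]⟩
  · rintro ⟨⟨x, y, z⟩, ⟨hx, hy, hz⟩, rfl⟩
    exact ⟨_, mem_image_of_mem _ hx, _, mem_image_of_mem _ hy, _, mem_image_of_mem _ hz,
      by simp [isometry_lineEmb.dist_eq]⟩

lemma totallyBounded_triangleSet_lineEmb {F : Set ℝ} (hF : IsCompact F) :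
    TotallyBounded (triangleSet (lineEmb '' F)) := by
  rw [triangleSet_lineEmb_image]
  exact ((hF.prod (hF.prod hF)).image (by fun_prop)).totallyBounded

lemma covN_sq_le_covN_triangleSet_lineEmb {F : Set ℝ} (hF : IsCompact F) {ε : ℝ≥0} (hε : ε ≠ 0) :
    covN F (2 * ε) ^ 2 ≤ covN (triangleSet (lineEmb '' F)) ε := by
  set ψ : ℝ × ℝ × ℝ → ℝ × ℝ := fun p => (sInf F + p.1, sInf F + p.2.2)
  have hψ : LipschitzWith 1 ψ := LipschitzWith.of_dist_le_mul fun p q => by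
    simpa [ψ, Prod.dist_eq] using
      max_le_max (le_refl (dist p.1 q.1)) (le_max_right (dist p.2.1 q.2.1) _)
  have hsub : F ×ˢ F ⊆ ψ '' triangleSet (lineEmb '' F) := by
    rintro ⟨y, z⟩ ⟨hy, hz⟩
    rw [triangleSet_lineEmb_image]
    refine ⟨_, mem_image_of_mem _ (show (sInf F, y, z) ∈ F ×ˢ F ×ˢ F from
      ⟨hF.sInf_mem ⟨y, hy⟩, hy, hz⟩), ?_⟩
    have hy₀ := csInf_le hF.bddBelow hy
    have hz₀ := csInf_le hF.bddBelow hz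
    simp only [ψ, Real.dist_eq, abs_of_nonpos (sub_nonpos.2 hy₀),
      abs_of_nonpos (sub_nonpos.2 hz₀)]
    ring_nf
  have key : externalCoveringNumber (2 * ε) F ^ 2 ≤
      externalCoveringNumber ε (triangleSet (lineEmb '' F)) :=
    calc externalCoveringNumber (2 * ε) F ^ 2
        ≤ externalCoveringNumber ε (F ×ˢ F) := by
          rw [sq]; exact externalCoveringNumber_two_mul_mul_le_prod F F
      _ ≤ externalCoveringNumber ε (ψ '' triangleSet (lineEmb '' F)) :=
          externalCoveringNumber_mono_set hsub
      _ ≤ externalCoveringNumber ε (triangleSet (lineEmb '' F)) := by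
          simpa using hψ.externalCoveringNumber_image_le (ε := ε) _
  rw [← covN_eq_externalCoveringNumber hF.totallyBounded (by simpa using hε),
    ← covN_eq_externalCoveringNumber (totallyBounded_triangleSet_lineEmb hF) hε] at key
  exact_mod_cast key

lemma covN_triangleSet_lineEmb_le {F : Set ℝ} (hF : IsCompact F) {ε : ℝ≥0} (hε : ε ≠ 0) :
    covN (triangleSet (lineEmb '' F)) ε ≤ (⌊diam F / ε⌋₊ + 1) ^ 3 := by
  have hsub : triangleSet (lineEmb '' F) ⊆ Icc 0 (diam F) ×ˢ Icc 0 (diam F) ×ˢ Icc 0 (diam F) := by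
    have hdist {a b : ℝ} (ha : a ∈ F) (hb : b ∈ F) : dist a b ∈ Icc 0 (diam F) :=
      ⟨dist_nonneg, dist_le_diam_of_mem hF.isBounded ha hb⟩
    rw [triangleSet_lineEmb_image]
    rintro _ ⟨⟨x, y, z⟩, ⟨hx, hy, hz⟩, rfl⟩
    exact ⟨hdist hx hy, hdist hz hy, hdist hx hz⟩
  obtain ⟨G, hGcard, hG⟩ := exists_isCover_Icc 0 (diam F) hε
  have key : externalCoveringNumber ε (triangleSet (lineEmb '' F)) ≤ (G ×ˢ G ×ˢ G).card := by
    refine (externalCoveringNumber_mono_set hsub).trans ?_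
    rw [← Set.encard_coe_eq_coe_finsetCard, Finset.coe_product, Finset.coe_product]
    exact iInf₂_le _ (hG.prod (hG.prod hG))
  rw [← covN_eq_externalCoveringNumber (totallyBounded_triangleSet_lineEmb hF) hε,
    Nat.cast_le] at key
  calc covN (triangleSet (lineEmb '' F)) ε ≤ (G ×ˢ G ×ˢ G).card := key
    _ = G.card ^ 3 := by rw [Finset.card_product, Finset.card_product]; ring
    _ ≤ (⌊diam F / ε⌋₊ + 1) ^ 3 := by simpa using Nat.pow_le_pow_left hGcard 3

lemma eventually_floor_div_add_one_le {M : ℝ} (hM : 0 ≤ M) :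
    ∀ᶠ δ in 𝓝[>] 0, (⌊M / δ⌋₊ + 1 : ℝ) ≤ δ⁻¹ ^ 2 := by
  filter_upwards [Ioo_mem_nhdsGT (show (0 : ℝ) < min 1 (M + 1)⁻¹ by positivity)]
    with δ ⟨hδ₀, hδ⟩
  have hδ₁ : δ < 1 := hδ.trans_le (min_le_left _ _)
  have hδM : δ * (M + 1) < 1 :=
    (lt_inv_mul_iff₀' (by positivity)).1 (by simpa using hδ.trans_le (min_le_right _ _))
  calc (⌊M / δ⌋₊ + 1 : ℝ) ≤ M / δ + 1 := by gcongr; exact Nat.floor_le (by positivity)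
    _ ≤ δ⁻¹ ^ 2 := by
      rw [div_add_one hδ₀.ne', inv_pow, ← one_div, div_le_div_iff₀ hδ₀ (by positivity)]
      nlinarith

/-- For compact `F ⊆ ℝ` (viewed inside a line in `ℝ²`), the lower box dimension of the
triangle set satisfies `dim_B Δ(F) ≥ 2 dim_B F`. -/
theorem lowerBoxDim_triangleSet_line (F : Set ℝ) (hF : IsCompact F) :
    2 * lowerBoxDim F ≤ lowerBoxDim (triangleSet (lineEmb '' F)) := by
  have h := mul_lowerBoxDim_le (n := 2) (k := 6) (A := F) (B := triangleSet (lineEmb '' F))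
    two_pos ?_ ?_
  · exact_mod_cast h
  · filter_upwards [self_mem_nhdsWithin] with δ (hδ : 0 < δ)
    lift δ to ℝ≥0 using hδ.le
    exact covN_sq_le_covN_triangleSet_lineEmb hF (by exact_mod_cast hδ.ne')
  · filter_upwards [self_mem_nhdsWithin, eventually_floor_div_add_one_le (diam_nonneg (s := F))]
      with δ (hδ : 0 < δ) hfloor
    lift δ to ℝ≥0 using hδ.le
    calc (covN (triangleSet (lineEmb '' F)) δ : ℝ) ≤ ((⌊diam F / δ⌋₊ + 1) ^ 3 : ℕ) := by
          exact_mod_cast covN_triangleSet_lineEmb_le hF (by exact_mod_cast hδ.ne')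
      _ ≤ (δ⁻¹ ^ 2) ^ 3 := by push_cast; gcongr
      _ = δ⁻¹ ^ 6 := by ring
end

section
/- Let 0 < r₁ ≤ r₂, and let γ > 0 satisfy 10γ < r₂ + r₁. Let δ > 0 and α, β ≥ 0. Suppose C ⊆ ℝ² is a 100δ-separated set with #C = δ^{−α}, and for each c ∈ C the circles c + r₁S¹ and c + r₂S¹ each contain sets C₁(c), C₂(c) of δ^{−β} many 100δ-separated points, such that at least half of the pairs (x,y) ∈ C₁(c) × C₂(c) satisfy r₂ − r₁ + 10γ < |x−y| < r₂ + r₁ − 10γ. Then the union ⋃_{c∈C} (C₁(c) ∪ C₂(c)) contains at least c₀ · δ^{−α/2 − β} many δ-separated points, where c₀ > 0 depends only on r₁, r₂, γ. -/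
open Metric Set

abbrev E2 := EuclideanSpace ℝ (Fin 2)

/-!
Let `S` be a maximal `δ`-separated subset of the union, and send every triple `(c, x, y)`, with
`(x, y)` a good pair for `c`, to the points of `S` within `δ` of `x` and of `y`. There are at
least `#C · δ^{-2β} / 2` triples and at most `#S²` images. A fibre over `(p, q)` is determined by
its centres `c` (the points on each circle around `c` are `100δ`-separated), and these lie in the
intersection of the `δ`-annuli of radii `r₁, r₂` around `p` and `q`. As `|p - q|` stays away
from `r₂ - r₁` and `r₁ + r₂`, the two circles meet transversally, so this intersection consists
of two pieces of diameter `O(δ)`, one on each side of the line `pq`, and a volume count bounds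
the fibres.
-/

def annulus {X : Type*} [PseudoMetricSpace X] (a : X) (r δ : ℝ) : Set X :=
  {c | |dist c a - r| ≤ δ}

section Annulus

variable {X : Type*} [PseudoMetricSpace X] {a b c c' x : X} {r r₁ r₂ γ δ : ℝ}

theorem mem_annulus : c ∈ annulus a r δ ↔ |dist c a - r| ≤ δ :=
  Iff.rfl

theorem mem_annulus_of_dist_lt (hxc : dist x c = r) (hxa : dist x a < δ) :
    c ∈ annulus a r δ := by
  rw [mem_annulus, dist_comm c a, ← hxc]
  exact (abs_dist_sub_le a x c).trans (dist_comm a x ▸ hxa.le)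

theorem dist_le_of_mem_annulus (hc : c ∈ annulus a r δ) (hc' : c' ∈ annulus a r δ) :
    dist c c' ≤ 2 * (r + δ) := by
  linarith [dist_triangle_right c c' a, (abs_le.1 (mem_annulus.1 hc)).2,
    (abs_le.1 (mem_annulus.1 hc')).2]

theorem gap_le_of_mem_annuli (h12 : r₁ ≤ r₂) (hab : r₂ - r₁ + γ - 2 * δ ≤ dist a b)
    (hab' : dist a b ≤ r₂ + r₁ - γ + 2 * δ) (hc : c ∈ annulus a r₁ δ ∩ annulus b r₂ δ) :
    γ - 4 * δ ≤ dist c a + dist c b - dist a b ∧ γ - 4 * δ ≤ dist c b + dist a b - dist c a ∧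
      γ - 4 * δ ≤ dist a b + dist c a - dist c b := by
  obtain ⟨h₁, h₂⟩ := abs_le.1 (mem_annulus.1 hc.1)
  obtain ⟨h₃, h₄⟩ := abs_le.1 (mem_annulus.1 hc.2)
  refine ⟨?_, ?_, ?_⟩ <;> linarith

end Annulus

theorem two_mul_mul_abs_sub_le_abs_sq_sub_sq {x y η : ℝ} (hx : η ≤ |x|) (hy : η ≤ |y|)
    (hxy : 0 ≤ x * y) : 2 * η * |x - y| ≤ |x ^ 2 - y ^ 2| := by
  have hsum : |x + y| = |x| + |y| := (abs_add_eq_add_abs_iff x y).2 (mul_nonneg_iff.1 hxy)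
  calc 2 * η * |x - y| ≤ (|x| + |y|) * |x - y| := by gcongr; linarith
    _ = |x ^ 2 - y ^ 2| := by rw [sq_sub_sq, abs_mul, hsum]

theorem abs_sq_sub_sq_le_of_abs_sub_le {ρ ρ' r δ R : ℝ} (hρ : |ρ - r| ≤ δ) (hρ' : |ρ' - r| ≤ δ)
    (h0 : 0 ≤ ρ) (h0' : 0 ≤ ρ') (hR : r + δ ≤ R) : |ρ ^ 2 - ρ' ^ 2| ≤ 4 * R * δ := by
  obtain ⟨hρl, hρu⟩ := abs_le.1 hρ
  obtain ⟨hρl', hρu'⟩ := abs_le.1 hρ'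
  rw [sq_sub_sq, abs_mul, abs_of_nonneg (by positivity : 0 ≤ ρ + ρ')]
  calc (ρ + ρ') * |ρ - ρ'| ≤ (2 * R) * (2 * δ) :=
        mul_le_mul (by linarith) (abs_sub_le_iff.2 ⟨by linarith, by linarith⟩) (abs_nonneg _)
          (by linarith)
    _ = 4 * R * δ := by ring

theorem one_div_sqrt_mul_rpow_le {δ α β K s : ℝ} (hδ : 0 < δ) (hK : 0 < K) (hs : 0 ≤ s)
    (h : δ ^ (-α) * (δ ^ (-β) * δ ^ (-β)) ≤ K * s ^ 2) : 1 / √K * δ ^ (-(α / 2) - β) ≤ s := by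
  have hsq : (δ ^ (-(α / 2) - β)) ^ 2 ≤ (√K * s) ^ 2 := by
    rw [mul_pow, Real.sq_sqrt hK.le, sq, ← Real.rpow_add hδ]
    convert h using 1
    rw [← Real.rpow_add hδ, ← Real.rpow_add hδ]
    ring_nf
  rw [one_div, inv_mul_le_iff₀ (by positivity)]
  exact (pow_le_pow_iff_left₀ (by positivity) (by positivity) two_ne_zero).1 hsq

section Packing

open MeasureTheory Module

theorem card_le_of_pairwise_le_dist {E : Type*} [NormedAddCommGroup E] [NormedSpace ℝ E]
    [FiniteDimensional ℝ E] {ρ D : ℝ} (hρ : 0 < ρ) (hD : 0 ≤ D) {T : Finset E}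
    (hsep : (T : Set E).Pairwise (ρ ≤ dist · ·)) (hdiam : ∀ x ∈ T, ∀ y ∈ T, dist x y ≤ D) :
    (T.card : ℝ) ≤ (2 * D / ρ + 1) ^ finrank ℝ E := by
  obtain rfl | ⟨p, hp⟩ := T.eq_empty_or_nonempty
  · simp only [Finset.card_empty, Nat.cast_zero]; positivity
  let _ : MeasurableSpace E := borel E
  have _ : BorelSpace E := ⟨rfl⟩
  set μ : Measure E := Measure.addHaar
  have hdisj : (T : Set E).PairwiseDisjoint (ball · (ρ / 2)) := fun x hx y hy hxy =>
    ball_disjoint_ball (by linarith [hsep hx hy hxy])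
  have hsub : (⋃ x ∈ T, ball x (ρ / 2)) ⊆ ball p (D + ρ / 2) :=
    iUnion₂_subset fun x hx => ball_subset_ball' (by linarith [hdiam x hx p hp])
  have hvol := (measure_biUnion_finset hdisj fun _ _ => measurableSet_ball).symm.trans_le
    (measure_mono (μ := μ) hsub)
  simp only [μ.addHaar_ball_of_pos _ (half_pos hρ), Finset.sum_const, nsmul_eq_mul,
    μ.addHaar_ball_of_pos _ (by positivity : 0 < D + ρ / 2), ← mul_assoc] at hvol
  have h0 : μ (ball 0 1) ≠ 0 := (measure_ball_pos μ 0 one_pos).ne'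
  have htop : μ (ball 0 1) ≠ ⊤ := measure_ball_lt_top.ne
  rw [ENNReal.mul_le_mul_iff_left h0 htop, ← ENNReal.ofReal_natCast,
    ← ENNReal.ofReal_mul (by positivity), ENNReal.ofReal_le_ofReal_iff (by positivity)] at hvol
  calc (T.card : ℝ) = T.card * (ρ / 2) ^ finrank ℝ E / (ρ / 2) ^ finrank ℝ E := by field_simp
    _ ≤ (D + ρ / 2) ^ finrank ℝ E / (ρ / 2) ^ finrank ℝ E := by gcongr
    _ = (2 * D / ρ + 1) ^ finrank ℝ E := by rw [← div_pow]; congr 1; field_simp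

end Packing

section Plane

open Module RealInnerProductSpace

variable {E : Type*} [NormedAddCommGroup E] [InnerProductSpace ℝ E]

theorem two_mul_inner_sub_sub (a b c : E) :
    2 * ⟪c - a, b - a⟫ = dist c a ^ 2 - dist c b ^ 2 + dist a b ^ 2 := by
  have h : c - b = (c - a) - (b - a) := by abel
  rw [dist_eq_norm c a, dist_eq_norm c b, dist_eq_norm a b, h, norm_sub_sq_real (c - a),
    norm_sub_rev a b]
  ring

namespace Orientation

variable [Fact (finrank ℝ E = 2)] (o : Orientation ℝ E (Fin 2))

local notation "ω" => o.areaForm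

theorem inner_sq_add_areaForm_sq_sub (a b c : E) :
    ⟪c - a, b - a⟫ ^ 2 + ω (c - a) (b - a) ^ 2 = dist c a ^ 2 * dist a b ^ 2 := by
  rw [o.inner_sq_add_areaForm_sq, dist_eq_norm, dist_eq_norm, norm_sub_rev a b]

/-- Heron's formula: `ω (c - a) (b - a)` is twice the signed area of the triangle `a b c`. -/
theorem four_mul_areaForm_sq_sub (a b c : E) :
    4 * ω (c - a) (b - a) ^ 2 =
      (dist c a + dist c b - dist a b) * (dist c b + dist a b - dist c a) *
        (dist a b + dist c a - dist c b) * (dist c a + dist c b + dist a b) := by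
  linear_combination 4 * o.inner_sq_add_areaForm_sq_sub a b c -
    (2 * ⟪c - a, b - a⟫ + dist c a ^ 2 - dist c b ^ 2 + dist a b ^ 2) *
      two_mul_inner_sub_sub a b c

theorem dist_mul_dist_le (a b c c' : E) :
    dist c c' * dist a b ≤ |⟪c - a, b - a⟫ - ⟪c' - a, b - a⟫| +
      |ω (c - a) (b - a) - ω (c' - a) (b - a)| := by
  have h : c - c' = (c - a) - (c' - a) := by abel
  have hsq : (dist c c' * dist a b) ^ 2 = (⟪c - a, b - a⟫ - ⟪c' - a, b - a⟫) ^ 2 +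
      (ω (c - a) (b - a) - ω (c' - a) (b - a)) ^ 2 := by
    rw [← inner_sub_left, ← LinearMap.sub_apply, ← map_sub, ← h, o.inner_sq_add_areaForm_sq,
      dist_eq_norm, dist_eq_norm, norm_sub_rev a b, mul_pow]
  refine (pow_le_pow_iff_left₀ (by positivity) (by positivity) two_ne_zero).1 ?_
  rw [hsq, add_sq, sq_abs, sq_abs]
  nlinarith [abs_nonneg (⟪c - a, b - a⟫ - ⟪c' - a, b - a⟫),
    abs_nonneg (ω (c - a) (b - a) - ω (c' - a) (b - a))]

variable {r₁ r₂ γ δ : ℝ} {a b c c' : E}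

theorem sq_div_le_abs_areaForm (h12 : r₁ ≤ r₂) (hδγ : 8 * δ ≤ γ)
    (hab : r₂ - r₁ + γ - 2 * δ ≤ dist a b) (hab' : dist a b ≤ r₂ + r₁ - γ + 2 * δ)
    (hc : c ∈ annulus a r₁ δ ∩ annulus b r₂ δ) : γ ^ 2 / 8 ≤ |ω (c - a) (b - a)| := by
  have hγ : 0 ≤ γ := by linarith [(abs_nonneg _).trans (mem_annulus.1 hc.1)]
  obtain ⟨g₁, g₂, g₃⟩ := gap_le_of_mem_annuli h12 hab hab' hc
  have h₁ : γ / 2 ≤ dist c a + dist c b - dist a b := by linarith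
  have h₂ : γ / 2 ≤ dist c b + dist a b - dist c a := by linarith
  have h₃ : γ / 2 ≤ dist a b + dist c a - dist c b := by linarith
  rw [← sq_le_sq₀ (by positivity) (abs_nonneg _), sq_abs, ← mul_le_mul_iff_right₀ four_pos]
  calc 4 * (γ ^ 2 / 8) ^ 2 ≤ (γ / 2) * (γ / 2) * (γ / 2) * (γ / 2 + γ / 2 + γ / 2) := by
        nlinarith [pow_nonneg hγ 4]
    _ ≤ (dist c a + dist c b - dist a b) * (dist c b + dist a b - dist c a) *
          (dist a b + dist c a - dist c b) * ((dist c a + dist c b - dist a b) +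
            (dist c b + dist a b - dist c a) + (dist a b + dist c a - dist c b)) := by
        gcongr
        all_goals first | linarith | (apply_rules [mul_nonneg] <;> linarith)
    _ = 4 * ω (c - a) (b - a) ^ 2 := by rw [o.four_mul_areaForm_sq_sub]; ring

theorem dist_le_of_mem_annuli_of_sameSide (h12 : r₁ ≤ r₂) (hδ : 0 < δ) (hδγ : 8 * δ ≤ γ)
    (hab : r₂ - r₁ + γ - 2 * δ ≤ dist a b) (hab' : dist a b ≤ r₂ + r₁ - γ + 2 * δ)
    (hc : c ∈ annulus a r₁ δ ∩ annulus b r₂ δ) (hc' : c' ∈ annulus a r₁ δ ∩ annulus b r₂ δ)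
    (hside : 0 ≤ ω (c - a) (b - a) * ω (c' - a) (b - a)) :
    dist c c' ≤ 2 * (4 * (r₂ + γ) + 128 * (r₂ + γ) ^ 3 / γ ^ 2) / γ * δ := by
  set R := r₂ + γ
  set P := fun x => ⟪x - a, b - a⟫
  set Q := fun x => ω (x - a) (b - a)
  -- `P x` and `Q x` are the coordinates of `x - a` along `b - a` and across it, scaled by
  -- `dist a b`. The two distances of `x` fix `P x` and `Q x ^ 2` up to `O(δ)`, and on one side
  -- of the line `ab` the lower bound `γ ^ 2 / 8 ≤ |Q x|` recovers `Q x` itself up to `O(δ)`.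
  have hγ : 0 < γ := by linarith
  obtain ⟨-, g₂, g₃⟩ := gap_le_of_mem_annuli h12 hab hab' hc
  have hd : γ / 2 ≤ dist a b := by linarith
  have hdR : dist a b ≤ 2 * R := by linarith
  have hR : ∀ x ∈ annulus a r₁ δ ∩ annulus b r₂ δ, dist x a ≤ R :=
    fun x hx => by linarith [(abs_le.1 (mem_annulus.1 hx.1)).2]
  have hR0 : 0 ≤ R := dist_nonneg.trans (hR c hc)
  have hsqa : |dist c a ^ 2 - dist c' a ^ 2| ≤ 4 * R * δ :=
    abs_sq_sub_sq_le_of_abs_sub_le hc.1 hc'.1 dist_nonneg dist_nonneg (by linarith)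
  have hsqb : |dist c b ^ 2 - dist c' b ^ 2| ≤ 4 * R * δ :=
    abs_sq_sub_sq_le_of_abs_sub_le hc.2 hc'.2 dist_nonneg dist_nonneg (by linarith)
  have hP : |P c - P c'| ≤ 4 * R * δ := by
    have := two_mul_inner_sub_sub a b c
    have := two_mul_inner_sub_sub a b c'
    rw [abs_le] at hsqa hsqb ⊢
    constructor <;> linarith
  have hPx : ∀ x ∈ annulus a r₁ δ ∩ annulus b r₂ δ, |P x| ≤ 2 * R ^ 2 := fun x hx =>
    calc |P x| ≤ ‖x - a‖ * ‖b - a‖ := abs_real_inner_le_norm _ _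
      _ = dist x a * dist a b := by rw [dist_eq_norm, dist_eq_norm, norm_sub_rev a b]
      _ ≤ R * (2 * R) := mul_le_mul (hR x hx) hdR dist_nonneg (dist_nonneg.trans (hR x hx))
      _ = 2 * R ^ 2 := by ring
  have hQsq : |Q c ^ 2 - Q c' ^ 2| ≤ 32 * R ^ 3 * δ := by
    have hid : Q c ^ 2 - Q c' ^ 2 =
        (dist c a ^ 2 - dist c' a ^ 2) * dist a b ^ 2 - (P c - P c') * (P c + P c') := by
      linear_combination o.inner_sq_add_areaForm_sq_sub a b c -
        o.inner_sq_add_areaForm_sq_sub a b c'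
    have hPsum : |P c + P c'| ≤ 4 * R ^ 2 := by
      linarith [abs_add_le (P c) (P c'), hPx c hc, hPx c' hc']
    have hd2 : dist a b ^ 2 ≤ 4 * R ^ 2 := by nlinarith
    rw [hid]
    calc _ ≤ |(dist c a ^ 2 - dist c' a ^ 2) * dist a b ^ 2| + |(P c - P c') * (P c + P c')| :=
          abs_sub _ _
      _ = |dist c a ^ 2 - dist c' a ^ 2| * dist a b ^ 2 + |P c - P c'| * |P c + P c'| := by
          rw [abs_mul, abs_mul, abs_of_nonneg (sq_nonneg (dist a b))]
      _ ≤ 4 * R * δ * (4 * R ^ 2) + 4 * R * δ * (4 * R ^ 2) := by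
          gcongr
      _ = 32 * R ^ 3 * δ := by ring
  have hQ : |Q c - Q c'| ≤ 128 * R ^ 3 / γ ^ 2 * δ := by
    have := two_mul_mul_abs_sub_le_abs_sq_sub_sq (o.sq_div_le_abs_areaForm h12 hδγ hab hab' hc)
      (o.sq_div_le_abs_areaForm h12 hδγ hab hab' hc') hside
    rw [div_mul_eq_mul_div, le_div_iff₀ (by positivity)]
    linarith
  calc dist c c' ≤ (|P c - P c'| + |Q c - Q c'|) / (γ / 2) := by
        rw [le_div_iff₀ (by positivity)]
        nlinarith [o.dist_mul_dist_le a b c c', dist_nonneg (x := c) (y := c')]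
    _ ≤ (4 * R * δ + 128 * R ^ 3 / γ ^ 2 * δ) / (γ / 2) := by gcongr
    _ = 2 * (4 * R + 128 * R ^ 3 / γ ^ 2) / γ * δ := by field_simp

theorem exists_dist_le_of_mem_annuli_of_sameSide (h1 : 0 < r₁) (h12 : r₁ ≤ r₂) (hγ : 0 < γ) :
    ∃ M, 0 ≤ M ∧ ∀ δ > 0, ∀ a b c c' : E, r₂ - r₁ + γ - 2 * δ ≤ dist a b →
      dist a b ≤ r₂ + r₁ - γ + 2 * δ → c ∈ annulus a r₁ δ ∩ annulus b r₂ δ →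
      c' ∈ annulus a r₁ δ ∩ annulus b r₂ δ → 0 ≤ ω (c - a) (b - a) * ω (c' - a) (b - a) →
      dist c c' ≤ M * δ := by
  have hR : 0 < r₂ + γ := by linarith
  set Msmall := 2 * (4 * (r₂ + γ) + 128 * (r₂ + γ) ^ 3 / γ ^ 2) / γ
  set Mlarge := 16 * r₁ / γ + 2 with hMlarge
  have hsmall : 0 ≤ Msmall := by positivity
  have hlarge : 0 ≤ Mlarge := by positivity
  refine ⟨Msmall + Mlarge, by positivity, fun δ hδ a b c c' hab hab' hc hc' hside => ?_⟩
  rcases le_or_gt (8 * δ) γ with hδγ | hγδ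
  · calc dist c c' ≤ Msmall * δ :=
          o.dist_le_of_mem_annuli_of_sameSide h12 hδ hδγ hab hab' hc hc' hside
      _ ≤ (Msmall + Mlarge) * δ := by gcongr; linarith
  · calc dist c c' ≤ 2 * (r₁ + δ) := dist_le_of_mem_annulus hc.1 hc'.1
      _ ≤ Mlarge * δ := by
          have : 2 * r₁ ≤ 16 * r₁ * δ / γ := by rw [le_div_iff₀ hγ]; nlinarith
          rw [hMlarge, add_mul, div_mul_eq_mul_div]
          linarith
      _ ≤ (Msmall + Mlarge) * δ := by gcongr; linarith

end Orientation

attribute [local instance] FiniteDimensional.of_fact_finrank_eq_two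

theorem exists_card_le_of_subset_annuli [Fact (finrank ℝ E = 2)] {r₁ r₂ γ : ℝ} (h1 : 0 < r₁)
    (h12 : r₁ ≤ r₂) (hγ : 0 < γ) :
    ∃ K : ℕ, 0 < K ∧ ∀ δ > 0, ∀ a b : E, r₂ - r₁ + γ - 2 * δ ≤ dist a b →
      dist a b ≤ r₂ + r₁ - γ + 2 * δ → ∀ T : Finset E, (T : Set E).Pairwise (δ ≤ dist · ·) →
      (T : Set E) ⊆ annulus a r₁ δ ∩ annulus b r₂ δ → T.card ≤ K := by
  let o : Orientation ℝ E (Fin 2) := (Module.finBasisOfFinrankEq ℝ E Fact.out).orientation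
  obtain ⟨M, hM, hdist⟩ := o.exists_dist_le_of_mem_annuli_of_sameSide h1 h12 hγ
  refine ⟨2 * ⌈(2 * M + 1) ^ 2⌉₊, by positivity, fun δ hδ a b hab hab' T hsep hT => ?_⟩
  set Q := fun x => o.areaForm (x - a) (b - a)
  have hside : ∀ s ⊆ T, (∀ x ∈ s, ∀ y ∈ s, 0 ≤ Q x * Q y) → s.card ≤ ⌈(2 * M + 1) ^ 2⌉₊ := by
    intro s hsT hs
    have := card_le_of_pairwise_le_dist hδ (by positivity : 0 ≤ M * δ) (hsep.mono hsT)
      fun x hx y hy => hdist δ hδ a b x y hab hab' (hT (hsT hx)) (hT (hsT hy)) (hs x hx y hy)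
    rw [(Fact.out : finrank ℝ E = 2), mul_div_assoc, mul_div_cancel_right₀ _ hδ.ne'] at this
    exact_mod_cast this.trans (Nat.le_ceil _)
  rw [← Finset.card_filter_add_card_filter_not (0 ≤ Q ·), two_mul]
  gcongr
  · exact hside _ (Finset.filter_subset _ _) fun x hx y hy =>
      mul_nonneg (Finset.mem_filter.1 hx).2 (Finset.mem_filter.1 hy).2
  · exact hside _ (Finset.filter_subset _ _) fun x hx y hy =>
      mul_nonneg_of_nonpos_of_nonpos (not_le.1 (Finset.mem_filter.1 hx).2).le
        (not_le.1 (Finset.mem_filter.1 hy).2).le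

end Plane

section Counting

variable {X : Type*} [MetricSpace X]

theorem eq_of_pairwise_le_dist {s : Set X} {δ : ℝ} (hs : s.Pairwise (2 * δ ≤ dist · ·))
    {x y p : X} (hx : x ∈ s) (hy : y ∈ s) (hxp : dist x p < δ) (hyp : dist y p < δ) : x = y :=
  by_contra fun hne => (hs hx hy hne).not_gt (by linarith [dist_triangle_right x y p])

theorem Finset.exists_subset_pairwise_le_dist_forall_exists_dist_lt (U : Finset X) {δ : ℝ}
    (hδ : 0 < δ) :
    ∃ S ⊆ U, (S : Set X).Pairwise (δ ≤ dist · ·) ∧ ∀ u ∈ U, ∃ s ∈ S, dist u s < δ := by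
  classical
  obtain ⟨S, hS, hmax⟩ := (U.powerset.filter fun S : Finset X => (S : Set X).Pairwise
    (δ ≤ dist · ·)).exists_max_image Finset.card ⟨∅, by simp⟩
  rw [Finset.mem_filter, Finset.mem_powerset] at hS
  refine ⟨S, hS.1, hS.2, fun u hu => ?_⟩
  by_contra! hfar
  have huS : u ∉ S := fun h => (hfar u h).not_gt (by simpa using hδ)
  have hins : ((insert u S : Finset X) : Set X).Pairwise (δ ≤ dist · ·) := by
    rw [Finset.coe_insert, Set.pairwise_insert]
    exact ⟨hS.2, fun s hs _ => ⟨hfar s hs, dist_comm u s ▸ hfar s hs⟩⟩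
  have := hmax _ (Finset.mem_filter.2 ⟨Finset.mem_powerset.2 (Finset.insert_subset hu hS.1), hins⟩)
  rw [Finset.card_insert_of_notMem huS] at this
  omega

theorem exists_pairwise_le_dist_sum_card_filter_le [DecidableEq X] {δ r₁ r₂ : ℝ} {K : ℕ}
    (hδ : 0 < δ) (good : X × X → Prop) [DecidablePred good] (C : Finset X) (C₁ C₂ : X → Finset X)
    (hC₁ : ∀ c ∈ C, ∀ x ∈ C₁ c, dist x c = r₁) (hC₂ : ∀ c ∈ C, ∀ y ∈ C₂ c, dist y c = r₂)
    (hsep₁ : ∀ c ∈ C, (C₁ c : Set X).Pairwise (2 * δ ≤ dist · ·))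
    (hsep₂ : ∀ c ∈ C, (C₂ c : Set X).Pairwise (2 * δ ≤ dist · ·))
    (hK : ∀ x y p q, good (x, y) → dist x p < δ → dist y q < δ → ∀ T ⊆ C,
      (T : Set X) ⊆ annulus p r₁ δ ∩ annulus q r₂ δ → T.card ≤ K) :
    ∃ S ⊆ C.biUnion (fun c => C₁ c ∪ C₂ c), (S : Set X).Pairwise (δ ≤ dist · ·) ∧
      ∑ c ∈ C, ((C₁ c ×ˢ C₂ c).filter good).card ≤ K * S.card ^ 2 := by
  set U := C.biUnion fun c => C₁ c ∪ C₂ c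
  obtain ⟨S, hSU, hSsep, hcover⟩ := U.exists_subset_pairwise_le_dist_forall_exists_dist_lt hδ
  choose! π hπS hπ using hcover
  refine ⟨S, hSU, hSsep, ?_⟩
  have hU₁ : ∀ c ∈ C, ∀ x ∈ C₁ c, x ∈ U := fun c hc x hx =>
    Finset.mem_biUnion.2 ⟨c, hc, Finset.mem_union_left _ hx⟩
  have hU₂ : ∀ c ∈ C, ∀ y ∈ C₂ c, y ∈ U := fun c hc y hy =>
    Finset.mem_biUnion.2 ⟨c, hc, Finset.mem_union_right _ hy⟩
  set B := C.sigma fun c => (C₁ c ×ˢ C₂ c).filter good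
  have hB : ∀ z ∈ B, z.1 ∈ C ∧ z.2.1 ∈ C₁ z.1 ∧ z.2.2 ∈ C₂ z.1 ∧ good z.2 := by
    intro z hz
    simp only [B, Finset.mem_sigma, Finset.mem_filter, Finset.mem_product] at hz
    exact ⟨hz.1, hz.2.1.1, hz.2.1.2, hz.2.2⟩
  rw [← Finset.card_sigma, sq, ← Finset.card_product]
  refine Finset.card_le_mul_card_image_of_maps_to (f := fun z => (π z.2.1, π z.2.2)) ?_ K ?_
  · intro z hz
    obtain ⟨hc, hx, hy, -⟩ := hB z hz
    exact Finset.mem_product.2 ⟨hπS _ (hU₁ _ hc _ hx), hπS _ (hU₂ _ hc _ hy)⟩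
  · rintro ⟨p, q⟩ -
    set F := B.filter fun z => (π z.2.1, π z.2.2) = (p, q)
    have hF : ∀ z ∈ F, z.1 ∈ C ∧ z.2.1 ∈ C₁ z.1 ∧ z.2.2 ∈ C₂ z.1 ∧ good z.2 ∧
        dist z.2.1 p < δ ∧ dist z.2.2 q < δ := by
      intro z hz
      obtain ⟨hzB, hzpq⟩ := Finset.mem_filter.1 hz
      obtain ⟨hc, hx, hy, hgood⟩ := hB z hzB
      obtain ⟨rfl, rfl⟩ := Prod.ext_iff.1 hzpq
      exact ⟨hc, hx, hy, hgood, hπ _ (hU₁ _ hc _ hx), hπ _ (hU₂ _ hc _ hy)⟩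
    obtain hempty | ⟨z₀, hz₀⟩ := F.eq_empty_or_nonempty
    · simp [hempty]
    have hinj : Set.InjOn Sigma.fst (F : Set ((_ : X) × X × X)) := by
      rintro ⟨c, x, y⟩ hz ⟨c', x', y'⟩ hz' (rfl : c = c')
      obtain ⟨hc, hx, hy, -, hxp, hyq⟩ := hF _ hz
      obtain ⟨-, hx', hy', -, hxp', hyq'⟩ := hF _ hz'
      obtain rfl : x = x' := eq_of_pairwise_le_dist (hsep₁ c hc) hx hx' hxp hxp'
      obtain rfl : y = y' := eq_of_pairwise_le_dist (hsep₂ c hc) hy hy' hyq hyq'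
      rfl
    rw [← Finset.card_image_of_injOn hinj]
    obtain ⟨-, -, -, hgood₀, hxp₀, hyq₀⟩ := hF z₀ hz₀
    refine hK _ _ p q hgood₀ hxp₀ hyq₀ _ (fun c hc => ?_) fun c hc => ?_
    · obtain ⟨z, hz, rfl⟩ := Finset.mem_image.1 hc
      exact (hF z hz).1
    · obtain ⟨z, hz, rfl⟩ := Finset.mem_image.1 (Finset.mem_coe.1 hc)
      obtain ⟨hc, hx, hy, -, hxp, hyq⟩ := hF z hz
      exact ⟨mem_annulus_of_dist_lt (hC₁ _ hc _ hx) hxp, mem_annulus_of_dist_lt (hC₂ _ hc _ hy) hyq⟩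

end Counting

open scoped Classical in
theorem counting_lemma_general (r₁ r₂ γ : ℝ) (h1 : 0 < r₁) (h12 : r₁ ≤ r₂) (hγ : 0 < γ) :
    ∃ c₀ > (0:ℝ), ∀ (δ α β : ℝ), 0 < δ → 0 ≤ α → 0 ≤ β →
      ∀ (C : Finset E2) (C₁ C₂ : E2 → Finset E2),
        (∀ x ∈ C, ∀ y ∈ C, x ≠ y → 100 * δ ≤ dist x y) →
        (C.card : ℝ) = δ ^ (-α) →
        (∀ c ∈ C,
          (∀ p ∈ C₁ c, dist p c = r₁) ∧ (∀ p ∈ C₂ c, dist p c = r₂) ∧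
          (∀ x ∈ C₁ c, ∀ y ∈ C₁ c, x ≠ y → 100 * δ ≤ dist x y) ∧
          (∀ x ∈ C₂ c, ∀ y ∈ C₂ c, x ≠ y → 100 * δ ≤ dist x y) ∧
          ((C₁ c).card : ℝ) = δ ^ (-β) ∧ ((C₂ c).card : ℝ) = δ ^ (-β) ∧
          (((C₁ c).card * (C₂ c).card : ℝ) ≤ 2 *
            (((C₁ c) ×ˢ (C₂ c)).filter (fun p =>
              r₂ - r₁ + 10 * γ < dist p.1 p.2 ∧ dist p.1 p.2 < r₂ + r₁ - 10 * γ)).card)) →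
        ∃ S : Finset E2, S ⊆ C.biUnion (fun c => C₁ c ∪ C₂ c) ∧
          (∀ x ∈ S, ∀ y ∈ S, x ≠ y → δ ≤ dist x y) ∧
          c₀ * δ ^ (-(α / 2) - β) ≤ (S.card : ℝ) := by
  have : Fact (Module.finrank ℝ E2 = 2) := ⟨finrank_euclideanSpace_fin⟩
  obtain ⟨K, hK0, hK⟩ :=
    exists_card_le_of_subset_annuli (E := E2) h1 h12 (γ := 10 * γ) (by positivity)
  refine ⟨1 / √(2 * K), by positivity, fun δ α β hδ _ _ C C₁ C₂ hCsep hCcard hC => ?_⟩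
  obtain ⟨S, hSU, hSsep, hsum⟩ := exists_pairwise_le_dist_sum_card_filter_le hδ
    (fun p => r₂ - r₁ + 10 * γ < dist p.1 p.2 ∧ dist p.1 p.2 < r₂ + r₁ - 10 * γ) C C₁ C₂
    (fun c hc => (hC c hc).1) (fun c hc => (hC c hc).2.1)
    (fun c hc x hx y hy hxy => by linarith [(hC c hc).2.2.1 x hx y hy hxy])
    (fun c hc x hx y hy hxy => by linarith [(hC c hc).2.2.2.1 x hx y hy hxy])
    (fun x y p q hxy hxp hyq T hTC hT => hK δ hδ p q
      (by linarith [dist_triangle4 x p q y, dist_comm y q])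
      (by linarith [dist_triangle4 p x y q, dist_comm p x]) T
      (fun c hc c' hc' hcc' => by linarith [hCsep c (hTC hc) c' (hTC hc') hcc']) hT)
  refine ⟨S, hSU, hSsep, ?_⟩
  have hcount : δ ^ (-α) * (δ ^ (-β) * δ ^ (-β)) ≤ 2 * K * S.card ^ 2 := by
    calc δ ^ (-α) * (δ ^ (-β) * δ ^ (-β)) = ∑ c ∈ C, ((C₁ c).card * (C₂ c).card : ℝ) := by
          rw [Finset.sum_congr rfl fun c hc => by rw [(hC c hc).2.2.2.2.1, (hC c hc).2.2.2.2.2.1],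
            Finset.sum_const, nsmul_eq_mul, hCcard]
      _ ≤ _ := Finset.sum_le_sum fun c hc => (hC c hc).2.2.2.2.2.2
      _ ≤ 2 * K * S.card ^ 2 := by
          rw [← Finset.mul_sum, mul_assoc]
          gcongr
          exact_mod_cast hsum
  exact one_div_sqrt_mul_rpow_le hδ (by positivity) (by positivity) hcount

open scoped Classical in
/-- Counting lemma (KY): let `0 < r₁ ≤ r₂`, `0 < γ` with `10γ < r₂ + r₁`. There is a constant
`c₀ > 0` (depending only on `r₁, r₂, γ`) such that: for any `δ > 0`, `α, β ≥ 0`, any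
`100δ`-separated set `C` with `#C = δ^{-α}`, and for each `c ∈ C` sets `C₁ c ⊆ c + r₁S¹`,
`C₂ c ⊆ c + r₂S¹` of `δ^{-β}` many `100δ`-separated points such that at least half of the
pairs `(x,y) ∈ C₁ c × C₂ c` satisfy `r₂ − r₁ + 10γ < |x−y| < r₂ + r₁ − 10γ`, the union
`⋃_{c ∈ C} (C₁ c ∪ C₂ c)` contains at least `c₀ δ^{-α/2-β}` many `δ`-separated points. -/
theorem counting_lemma (r₁ r₂ γ : ℝ) (h1 : 0 < r₁) (h12 : r₁ ≤ r₂) (hγ : 0 < γ)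
    (hγ2 : 10 * γ < r₂ + r₁) :
    ∃ c₀ > (0:ℝ), ∀ (δ α β : ℝ), 0 < δ → 0 ≤ α → 0 ≤ β →
      ∀ (C : Finset E2) (C₁ C₂ : E2 → Finset E2),
        (∀ x ∈ C, ∀ y ∈ C, x ≠ y → 100 * δ ≤ dist x y) →
        (C.card : ℝ) = δ ^ (-α) →
        (∀ c ∈ C,
          (∀ p ∈ C₁ c, dist p c = r₁) ∧ (∀ p ∈ C₂ c, dist p c = r₂) ∧
          (∀ x ∈ C₁ c, ∀ y ∈ C₁ c, x ≠ y → 100 * δ ≤ dist x y) ∧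
          (∀ x ∈ C₂ c, ∀ y ∈ C₂ c, x ≠ y → 100 * δ ≤ dist x y) ∧
          ((C₁ c).card : ℝ) = δ ^ (-β) ∧ ((C₂ c).card : ℝ) = δ ^ (-β) ∧
          (((C₁ c).card * (C₂ c).card : ℝ) ≤ 2 *
            (((C₁ c) ×ˢ (C₂ c)).filter (fun p =>
              r₂ - r₁ + 10 * γ < dist p.1 p.2 ∧ dist p.1 p.2 < r₂ + r₁ - 10 * γ)).card)) →
        ∃ S : Finset E2, S ⊆ C.biUnion (fun c => C₁ c ∪ C₂ c) ∧
          (∀ x ∈ S, ∀ y ∈ S, x ≠ y → δ ≤ dist x y) ∧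
          c₀ * δ ^ (-(α / 2) - β) ≤ (S.card : ℝ) :=
  counting_lemma_general r₁ r₂ γ h1 h12 hγ
end

section
/- Let 0 < r₁ ≤ r₂ and γ > 0 with 10γ < r₁ + r₂. There exists a constant A > 0 depending only on r₁, r₂, γ such that for all sufficiently small δ > 0 and all points x₁, x₂ ∈ ℝ² with r₂ − r₁ + γ < |x₁ − x₂| < r₂ + r₁ − γ, the intersection of the annuli T₁ = {c : r₁ − 1.5δ ≤ |c − x₁| ≤ r₁ + 1.5δ} and T₂ = {c : r₂ − 1.5δ ≤ |c − x₂| ≤ r₂ + 1.5δ} can be covered by two squares of side length Aδ. -/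
open Metric Set

lemma dist_sq_eq' (x y : E2) : dist x y ^ 2 = (x 0 - y 0)^2 + (x 1 - y 1)^2 := by
  rw [EuclideanSpace.dist_eq, Real.sq_sqrt (by positivity)]
  simp [Fin.sum_univ_two, Real.dist_eq, sq_abs]

lemma sq_diff_bound (t r δ M : ℝ) (h1 : r - 1.5*δ ≤ t) (h2 : t ≤ r + 1.5*δ)
    (h3 : 0 ≤ t + r) (h4 : t + r ≤ M) (hδ : 0 ≤ δ) :
    t^2 - r^2 ≤ 3/2*δ*M ∧ -(3/2*δ*M) ≤ t^2 - r^2 := by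
  constructor
  · nlinarith [mul_nonneg (by linarith : (0:ℝ) ≤ 1.5*δ - (t - r)) h3,
      mul_nonneg (by linarith : (0:ℝ) ≤ 1.5*δ) (by linarith : (0:ℝ) ≤ M - (t+r))]
  · nlinarith [mul_nonneg (by linarith : (0:ℝ) ≤ (t - r) + 1.5*δ) h3,
      mul_nonneg (by linarith : (0:ℝ) ≤ 1.5*δ) (by linarith : (0:ℝ) ≤ M - (t+r))]

lemma abs_le_of_sq_le' (p r : ℝ) (h : p^2 ≤ r^2) (hr : 0 ≤ r) : p ≤ r ∧ -r ≤ p := by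
  constructor <;> nlinarith [sq_nonneg (p - r), sq_nonneg (p + r)]

lemma xbound (X d γ δ C M : ℝ) (hγd : γ < d) (hγ : 0 < γ) (hδ : 0 < δ) (hC : 0 < C)
    (hCeq : C*(2*γ) = 3*M) (h1 : X*(2*d) ≤ 3*M*δ) (h2 : -(3*M*δ) ≤ X*(2*d)) :
    X ≤ C*δ ∧ -(C*δ) ≤ X := by
  have hd0 : 0 < d := lt_trans hγ hγd
  have h3 : X*(2*d) ≤ (C*δ)*(2*d) := by
    nlinarith [mul_nonneg (mul_nonneg hC.le hδ.le) (by linarith : (0:ℝ) ≤ d - γ)]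
  have h4 : (-(C*δ))*(2*d) ≤ X*(2*d) := by
    nlinarith [mul_nonneg (mul_nonneg hC.le hδ.le) (by linarith : (0:ℝ) ≤ d - γ)]
  exact ⟨le_of_mul_le_mul_right h3 (by linarith), le_of_mul_le_mul_right h4 (by linarith)⟩

lemma abs_mul_bound (X S a b : ℝ) (h1 : X ≤ a) (h2 : -a ≤ X) (h3 : S ≤ b) (h4 : -b ≤ S) :
    X*S ≤ a*b ∧ -(a*b) ≤ X*S := by
  constructor
  · nlinarith [mul_nonneg (by linarith : (0:ℝ) ≤ a - X) (by linarith : (0:ℝ) ≤ b + S),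
      mul_nonneg (by linarith : (0:ℝ) ≤ a + X) (by linarith : (0:ℝ) ≤ b - S)]
  · nlinarith [mul_nonneg (by linarith : (0:ℝ) ≤ a - X) (by linarith : (0:ℝ) ≤ b - S),
      mul_nonneg (by linarith : (0:ℝ) ≤ a + X) (by linarith : (0:ℝ) ≤ b + S)]

lemma ybound (Z py γ δ C₂ C₃ : ℝ) (hpy : γ/2 < py) (hγ : 0 < γ) (hδ : 0 < δ)
    (hC₂ : 0 < C₂) (hCeq : C₃*γ = 2*C₂) (hZpy : 0 ≤ Z + py)
    (h1 : Z*(Z+2*py) ≤ C₂*δ) (h2 : -(C₂*δ) ≤ Z*(Z+2*py)) :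
    Z ≤ C₃*δ ∧ -(C₃*δ) ≤ Z := by
  have hC₃ : 0 < C₃ := by nlinarith
  have hpos : γ/2 < Z + 2*py := by linarith
  constructor
  · rcases le_or_gt Z 0 with h | h
    · nlinarith
    · nlinarith [mul_le_mul_of_nonneg_left hpos.le h.le]
  · rcases le_or_gt 0 Z with h | h
    · nlinarith
    · nlinarith [mul_le_mul_of_nonneg_left hpos.le (by linarith : (0:ℝ) ≤ -Z)]

lemma sumsq (X Z a b δ : ℝ) (ha : 0 < a) (hb : 0 < b) (hδ : 0 < δ)
    (h1 : X ≤ a*δ) (h2 : -(a*δ) ≤ X) (h3 : Z ≤ b*δ) (h4 : -(b*δ) ≤ Z) :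
    X^2 + Z^2 ≤ ((2*(a+b)+1)*δ/2)^2 := by
  nlinarith [mul_nonneg (by linarith : (0:ℝ) ≤ a*δ - X) (by linarith : (0:ℝ) ≤ a*δ + X),
    mul_nonneg (by linarith : (0:ℝ) ≤ b*δ - Z) (by linarith : (0:ℝ) ≤ b*δ + Z),
    mul_nonneg (mul_nonneg ha.le hb.le) (mul_nonneg hδ.le hδ.le),
    mul_nonneg (mul_nonneg (by linarith : (0:ℝ) ≤ a + b) hδ.le) hδ.le, sq_nonneg δ]

lemma coordfin (p B : ℝ) (hB : 0 ≤ B) (h : p^2 ≤ B^2) : |p| ≤ B := by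
  rw [abs_le]
  constructor <;> nlinarith [sq_nonneg (p - B), sq_nonneg (p + B)]

set_option maxHeartbeats 4000000

/-- Annuli intersection lemma: for `0 < r₁ ≤ r₂` and `0 < γ` with `10γ < r₁ + r₂`, there is
`A > 0` depending only on `r₁, r₂, γ` such that for all sufficiently small `δ > 0` and all
`x₁, x₂ ∈ ℝ²` with `r₂ − r₁ + γ < |x₁ − x₂| < r₂ + r₁ − γ`, the intersection of the annuli
`{c : r₁ − 1.5δ ≤ |c − x₁| ≤ r₁ + 1.5δ}` and `{c : r₂ − 1.5δ ≤ |c − x₂| ≤ r₂ + 1.5δ}`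
can be covered by two axis-parallel squares of side length `Aδ`. -/
theorem annuli_intersection_covered (r₁ r₂ γ : ℝ) (h1 : 0 < r₁) (h12 : r₁ ≤ r₂)
    (hγ : 0 < γ) (hγ2 : 10 * γ < r₁ + r₂) :
    ∃ A > (0:ℝ), ∃ δ₀ > (0:ℝ), ∀ δ : ℝ, 0 < δ → δ < δ₀ →
      ∀ x₁ x₂ : E2, r₂ - r₁ + γ < dist x₁ x₂ → dist x₁ x₂ < r₂ + r₁ - γ →
        ∃ y₁ y₂ : E2,
          ({c : E2 | r₁ - 1.5 * δ ≤ dist c x₁ ∧ dist c x₁ ≤ r₁ + 1.5 * δ} ∩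
            {c : E2 | r₂ - 1.5 * δ ≤ dist c x₂ ∧ dist c x₂ ≤ r₂ + 1.5 * δ}) ⊆
          ({c : E2 | ∀ i, |c i - y₁ i| ≤ A * δ / 2} ∪
            {c : E2 | ∀ i, |c i - y₂ i| ≤ A * δ / 2}) := by
  have hr2 : 0 < r₂ := lt_of_lt_of_le h1 h12
  set M : ℝ := 2*r₂ + 2 with hMdef
  clear_value M
  have hM : 0 < M := by rw [hMdef]; positivity
  set C₁ : ℝ := 3*M/(2*γ) with hC₁def
  clear_value C₁
  have hC₁ : 0 < C₁ := by rw [hC₁def]; positivity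
  have hC₁eq : C₁ * (2*γ) = 3*M := by rw [hC₁def]; field_simp
  set C₂ : ℝ := M*(3/2 + C₁) with hC₂def
  clear_value C₂
  have hC₂ : 0 < C₂ := by rw [hC₂def]; positivity
  set C₃ : ℝ := 2*C₂/γ with hC₃def
  clear_value C₃
  have hC₃ : 0 < C₃ := by rw [hC₃def]; positivity
  have hC₃eq : C₃ * γ = 2*C₂ := by rw [hC₃def]; field_simp
  refine ⟨2*(C₁+C₃)+1, by positivity, 1, one_pos, ?_⟩
  intro δ hδ hδ1 x₁ x₂ hlo hhi
  set A : ℝ := 2*(C₁+C₃)+1 with hAdef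
  clear_value A
  have hA0 : 0 ≤ A*δ/2 := by rw [hAdef]; positivity
  set d : ℝ := dist x₁ x₂ with hddef
  clear_value d
  have hγd : γ < d := by linarith [hlo]
  have hd0 : 0 < d := lt_trans hγ hγd
  have hdR : d < r₁ + r₂ := by linarith [hhi]
  set s0 : ℝ := x₂ 0 - x₁ 0 with hs0def
  clear_value s0
  set s1 : ℝ := x₂ 1 - x₁ 1 with hs1def
  clear_value s1
  have hs : s0^2 + s1^2 = d^2 := by
    rw [hs0def, hs1def, hddef, dist_comm x₁ x₂]
    exact (dist_sq_eq' x₂ x₁).symm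
  set px : ℝ := (r₁^2 - r₂^2 + d^2)/(2*d) with hpxdef
  clear_value px
  have hkey : 4*d^2*(r₁^2 - px^2) = (r₁+r₂-d)*(r₂+d-r₁)*(d+r₁-r₂)*(d+r₁+r₂) := by
    rw [hpxdef]; field_simp [hd0.ne']; ring
  have hf1 : γ < r₁+r₂-d := by linarith
  have hf2 : d ≤ r₂+d-r₁ := by linarith
  have hf3 : γ < d+r₁-r₂ := by linarith
  have hf4 : 2*d < d+r₁+r₂ := by linarith
  have p1 : γ*d < (r₁+r₂-d)*(r₂+d-r₁) := by
    calc γ*d < (r₁+r₂-d)*d := mul_lt_mul_of_pos_right hf1 hd0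
      _ ≤ (r₁+r₂-d)*(r₂+d-r₁) := mul_le_mul_of_nonneg_left hf2 (by linarith)
  have p2 : γ*(2*d) < (d+r₁-r₂)*(d+r₁+r₂) := by
    calc γ*(2*d) < (d+r₁-r₂)*(2*d) := mul_lt_mul_of_pos_right hf3 (by linarith)
      _ < (d+r₁-r₂)*(d+r₁+r₂) := mul_lt_mul_of_pos_left hf4 (by linarith)
  have p3 : (γ*d)*(γ*(2*d)) < ((r₁+r₂-d)*(r₂+d-r₁))*((d+r₁-r₂)*(d+r₁+r₂)) :=
    mul_lt_mul'' p1 p2 (by positivity) (by positivity)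
  have h5 : 2*γ^2*d^2 < 4*d^2*(r₁^2 - px^2) := by
    calc 2*γ^2*d^2 = (γ*d)*(γ*(2*d)) := by ring
      _ < ((r₁+r₂-d)*(r₂+d-r₁))*((d+r₁-r₂)*(d+r₁+r₂)) := p3
      _ = 4*d^2*(r₁^2 - px^2) := by linear_combination -hkey
  have h6 : 2*γ^2 < 4*(r₁^2 - px^2) := by
    have h7 : d^2*(2*γ^2) < d^2*(4*(r₁^2 - px^2)) := by
      calc d^2*(2*γ^2) = 2*γ^2*d^2 := by ring
        _ < 4*d^2*(r₁^2 - px^2) := h5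
        _ = d^2*(4*(r₁^2 - px^2)) := by ring
    exact lt_of_mul_lt_mul_left h7 (sq_nonneg d)
  have hq : γ^2/4 < r₁^2 - px^2 := by linarith [sq_nonneg γ]
  have hqnn : 0 ≤ r₁^2 - px^2 := by linarith [sq_nonneg γ]
  set py : ℝ := Real.sqrt (r₁^2 - px^2) with hpydef
  clear_value py
  have hpy0 : 0 ≤ py := by rw [hpydef]; exact Real.sqrt_nonneg _
  have hpy2 : py^2 = r₁^2 - px^2 := by rw [hpydef]; exact Real.sq_sqrt hqnn
  have hpyγ : γ/2 < py := by
    rw [hpydef]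
    exact (Real.lt_sqrt (by positivity)).mpr (by linarith [hq])
  have hpxr : px ≤ r₁ ∧ -r₁ ≤ px :=
    abs_le_of_sq_le' px r₁ (by linarith [sq_nonneg γ]) h1.le
  set a1 : ℝ := x₁ 0 + (px*s0 - py*s1)/d with ha1def
  clear_value a1
  set b1 : ℝ := x₁ 1 + (px*s1 + py*s0)/d with hb1def
  clear_value b1
  set a2 : ℝ := x₁ 0 + (px*s0 + py*s1)/d with ha2def
  clear_value a2
  set b2 : ℝ := x₁ 1 + (px*s1 - py*s0)/d with hb2def
  clear_value b2
  refine ⟨(EuclideanSpace.equiv (Fin 2) ℝ).symm ![a1, b1],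
         (EuclideanSpace.equiv (Fin 2) ℝ).symm ![a2, b2], ?_⟩
  intro c hc
  obtain ⟨⟨hc1l, hc1r⟩, hc2l, hc2r⟩ := hc
  set u : ℝ := dist c x₁ with hudef
  clear_value u
  set v : ℝ := dist c x₂ with hvdef
  clear_value v
  have hu0 : 0 ≤ u := by rw [hudef]; exact dist_nonneg
  have hv0 : 0 ≤ v := by rw [hvdef]; exact dist_nonneg
  set w0 : ℝ := c 0 - x₁ 0 with hw0def
  clear_value w0
  set w1 : ℝ := c 1 - x₁ 1 with hw1def
  clear_value w1
  have hu2 : u^2 = w0^2 + w1^2 := by rw [hudef, hw0def, hw1def]; exact dist_sq_eq' c x₁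
  have hv2 : v^2 = (w0-s0)^2 + (w1-s1)^2 := by
    rw [show w0 - s0 = c 0 - x₂ 0 by rw [hw0def, hs0def]; ring,
        show w1 - s1 = c 1 - x₂ 1 by rw [hw1def, hs1def]; ring, hvdef]
    exact dist_sq_eq' c x₂
  set x : ℝ := (w0*s0 + w1*s1)/d with hxdef
  clear_value x
  set yy : ℝ := (w1*s0 - w0*s1)/d with hyydef
  clear_value yy
  have hx' : x*d = w0*s0 + w1*s1 := by rw [hxdef]; field_simp
  have hy' : yy*d = w1*s0 - w0*s1 := by rw [hyydef]; field_simp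
  have hpx' : px*(2*d) = r₁^2 - r₂^2 + d^2 := by rw [hpxdef]; field_simp
  have hxy : x^2 + yy^2 = u^2 := by
    refine mul_right_cancel₀ (pow_ne_zero 2 hd0.ne') ?_
    linear_combination (x*d + (w0*s0+w1*s1))*hx' + (yy*d + (w1*s0-w0*s1))*hy'
      - (s0^2+s1^2)*hu2 + u^2*hs
  -- bounds on u, v
  have huM : u + r₁ ≤ M := by rw [hMdef]; linarith
  have hvM : v + r₂ ≤ M := by rw [hMdef]; linarith
  have hub := sq_diff_bound u r₁ δ M hc1l hc1r (by linarith) huM hδ.le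
  have hvb := sq_diff_bound v r₂ δ M hc2l hc2r (by linarith) hvM hδ.le
  -- the x-coordinate estimate
  have heq2 : (x - px)*(2*d) = (u^2 - r₁^2) - (v^2 - r₂^2) := by
    linear_combination 2*hx' - hpx' - hu2 + hv2 + hs
  have hX := xbound (x - px) d γ δ C₁ M hγd hγ hδ hC₁ hC₁eq
    (by rw [heq2]; linarith [hub.1, hvb.2]) (by rw [heq2]; linarith [hub.2, hvb.1])
  -- |x| ≤ u, |x + px| ≤ M
  have hxu : x ≤ u ∧ -u ≤ x :=
    abs_le_of_sq_le' x u (by linarith [sq_nonneg yy, hxy]) hu0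
  have hxpxM : x + px ≤ M ∧ -M ≤ x + px := by
    constructor
    · rw [hMdef]; rw [hMdef] at huM; linarith [hxu.1, hpxr.1, hc1r]
    · rw [hMdef]; linarith [hxu.2, hpxr.2, hc1r]
  -- x² - px² bound
  have hxx : x^2 - px^2 ≤ (C₁*δ)*M ∧ -((C₁*δ)*M) ≤ x^2 - px^2 := by
    have h := abs_mul_bound (x - px) (x + px) (C₁*δ) M hX.1 hX.2 hxpxM.1 hxpxM.2
    have e : (x - px)*(x + px) = x^2 - px^2 := by ring
    rw [e] at h; exact h
  -- yy² - py² bound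
  have he : yy^2 - py^2 = (u^2 - r₁^2) - (x^2 - px^2) := by
    rw [hpy2]; linarith [hxy]
  have hbig1 : yy^2 - py^2 ≤ C₂*δ := by
    rw [hC₂def]; rw [he]; linarith [hub.1, hxx.2]
  have hbig2 : -(C₂*δ) ≤ yy^2 - py^2 := by
    rw [hC₂def]; rw [he]; linarith [hub.2, hxx.1]
  -- geometry: representation of w in terms of x, yy
  have hw0' : w0 * d = x * s0 - yy * s1 := by
    refine mul_right_cancel₀ hd0.ne' ?_
    linear_combination (-s0)*hx' + s1*hy' - w0*hs
  have hw1' : w1 * d = x * s1 + yy * s0 := by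
    refine mul_right_cancel₀ hd0.ne' ?_
    linear_combination (-s1)*hx' + (-s0)*hy' - w1*hs
  -- case on the sign of yy
  rcases le_or_gt 0 yy with hy | hy
  · -- near point (px, py): first square
    left
    have hY := ybound (yy - py) py γ δ C₂ C₃ hpyγ hγ hδ hC₂ hC₃eq
      (by linarith) (by rw [show (yy-py)*((yy-py)+2*py) = yy^2 - py^2 by ring]; exact hbig1)
      (by rw [show (yy-py)*((yy-py)+2*py) = yy^2 - py^2 by ring]; exact hbig2)
    have h0 : (c 0 - a1) * d = (x-px)*s0 - (yy-py)*s1 := by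
      rw [ha1def]
      have e : (c 0 - (x₁ 0 + (px*s0 - py*s1)/d)) * d = w0 * d - (px*s0 - py*s1) := by
        rw [hw0def]; field_simp [hd0.ne']; ring
      rw [e]; linear_combination hw0'
    have h1' : (c 1 - b1) * d = (x-px)*s1 + (yy-py)*s0 := by
      rw [hb1def]
      have e : (c 1 - (x₁ 1 + (px*s1 + py*s0)/d)) * d = w1 * d - (px*s1 + py*s0) := by
        rw [hw1def]; field_simp [hd0.ne']; ring
      rw [e]; linear_combination hw1'
    have hfin : ((c 0 - a1)^2 + (c 1 - b1)^2) * d^2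
        = ((x-px)^2 + (yy-py)^2) * d^2 := by
      linear_combination ((c 0 - a1)*d + ((x-px)*s0 - (yy-py)*s1)) * h0
        + ((c 1 - b1)*d + ((x-px)*s1 + (yy-py)*s0)) * h1'
        + ((x-px)^2 + (yy-py)^2) * hs
    have hfin2 : (c 0 - a1)^2 + (c 1 - b1)^2 = (x-px)^2 + (yy-py)^2 :=
      mul_right_cancel₀ (pow_ne_zero 2 hd0.ne') hfin
    have hsq : (x-px)^2 + (yy-py)^2 ≤ (A*δ/2)^2 := by
      rw [hAdef]
      exact sumsq (x-px) (yy-py) C₁ C₃ δ hC₁ hC₃ hδ hX.1 hX.2 hY.1 hY.2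
    have hc0 : (c 0 - a1)^2 ≤ (A*δ/2)^2 := by linarith [sq_nonneg (c 1 - b1), hfin2, hsq]
    have hc1 : (c 1 - b1)^2 ≤ (A*δ/2)^2 := by linarith [sq_nonneg (c 0 - a1), hfin2, hsq]
    intro i
    have e0 : ((EuclideanSpace.equiv (Fin 2) ℝ).symm ![a1, b1] : E2) 0 = a1 := by simp
    have e1 : ((EuclideanSpace.equiv (Fin 2) ℝ).symm ![a1, b1] : E2) 1 = b1 := by simp
    fin_cases i
    · show |c 0 - ((EuclideanSpace.equiv (Fin 2) ℝ).symm ![a1, b1] : E2) 0| ≤ A*δ/2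
      rw [e0]; exact coordfin _ _ hA0 hc0
    · show |c 1 - ((EuclideanSpace.equiv (Fin 2) ℝ).symm ![a1, b1] : E2) 1| ≤ A*δ/2
      rw [e1]; exact coordfin _ _ hA0 hc1
  · -- near point (px, -py): second square
    right
    have hY := ybound (-(yy + py)) py γ δ C₂ C₃ hpyγ hγ hδ hC₂ hC₃eq
      (by linarith) (by rw [show (-(yy+py))*((-(yy+py))+2*py) = yy^2 - py^2 by ring]; exact hbig1)
      (by rw [show (-(yy+py))*((-(yy+py))+2*py) = yy^2 - py^2 by ring]; exact hbig2)
    have hY1 : yy + py ≤ C₃*δ := by linarith [hY.2]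
    have hY2' : -(C₃*δ) ≤ yy + py := by linarith [hY.1]
    have h0 : (c 0 - a2) * d = (x-px)*s0 - (yy+py)*s1 := by
      rw [ha2def]
      have e : (c 0 - (x₁ 0 + (px*s0 + py*s1)/d)) * d = w0 * d - (px*s0 + py*s1) := by
        rw [hw0def]; field_simp [hd0.ne']; ring
      rw [e]; linear_combination hw0'
    have h1' : (c 1 - b2) * d = (x-px)*s1 + (yy+py)*s0 := by
      rw [hb2def]
      have e : (c 1 - (x₁ 1 + (px*s1 - py*s0)/d)) * d = w1 * d - (px*s1 - py*s0) := by
        rw [hw1def]; field_simp [hd0.ne']; ring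
      rw [e]; linear_combination hw1'
    have hfin : ((c 0 - a2)^2 + (c 1 - b2)^2) * d^2
        = ((x-px)^2 + (yy+py)^2) * d^2 := by
      linear_combination ((c 0 - a2)*d + ((x-px)*s0 - (yy+py)*s1)) * h0
        + ((c 1 - b2)*d + ((x-px)*s1 + (yy+py)*s0)) * h1'
        + ((x-px)^2 + (yy+py)^2) * hs
    have hfin2 : (c 0 - a2)^2 + (c 1 - b2)^2 = (x-px)^2 + (yy+py)^2 :=
      mul_right_cancel₀ (pow_ne_zero 2 hd0.ne') hfin
    have hsq : (x-px)^2 + (yy+py)^2 ≤ (A*δ/2)^2 := by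
      rw [hAdef]
      exact sumsq (x-px) (yy+py) C₁ C₃ δ hC₁ hC₃ hδ hX.1 hX.2 hY1 hY2'
    have hc0 : (c 0 - a2)^2 ≤ (A*δ/2)^2 := by linarith [sq_nonneg (c 1 - b2), hfin2, hsq]
    have hc1 : (c 1 - b2)^2 ≤ (A*δ/2)^2 := by linarith [sq_nonneg (c 0 - a2), hfin2, hsq]
    intro i
    have e0 : ((EuclideanSpace.equiv (Fin 2) ℝ).symm ![a2, b2] : E2) 0 = a2 := by simp
    have e1 : ((EuclideanSpace.equiv (Fin 2) ℝ).symm ![a2, b2] : E2) 1 = b2 := by simp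
    fin_cases i
    · show |c 0 - ((EuclideanSpace.equiv (Fin 2) ℝ).symm ![a2, b2] : E2) 0| ≤ A*δ/2
      rw [e0]; exact coordfin _ _ hA0 hc0
    · show |c 1 - ((EuclideanSpace.equiv (Fin 2) ℝ).symm ![a2, b2] : E2) 1| ≤ A*δ/2
      rw [e1]; exact coordfin _ _ hA0 hc1
end
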